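/- arXiv:2507.14772 — 3 statements merged into one kernel-verified Lean document; each statement's English description precedes it below -/
import Mathlib

section
/- Let (λ,κ) = (0,0), so the generalized system reads ∂ₜ∂ₓu + u·∂ₓ²u = −∫₀¹(∂ₓu(y,t))² dy and ∂ₜb + u·∂ₓb = 0. Let (u,b) be a smooth solution on [0,1]×[0,T) with Dirichlet boundary conditions, and let γ : [0,1]×[0,T) → [0,1] be jointly smooth with γ(α,0) = α, ∂ₜγ(α,t) = u(γ(α,t),t), γ(0,t) = 0, γ(1,t) = 1, and ∂_αγ(α,t) = exp(∫₀ᵗ ∂ₓu(γ(α,s),s) ds) for all (α,t). Then for all α ∈ [0,1] and t ∈ [0,T): (a) b(γ(α,t),t) = b₀(α); (b) ∂_αγ(α,t) = e^{t·u₀'(α)} / ∫₀¹ e^{t·u₀'(β)} dβ; (c) ∂ₓu(γ(α,t),t) = u₀'(α) − (∫₀¹ u₀'(β)·e^{t·u₀'(β)} dβ) / (∫₀¹ e^{t·u₀'(β)} dβ); and (d) 0 ≤ u₀'(α) − ∂ₓu(γ(α,t),t) ≤ ∫₀¹ u₀'(β)·e^{t·u₀'(β)} dβ. -/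
open Real Set Filter Topology MeasureTheory intervalIntegral

noncomputable section

/-- Spatial derivative `∂ₓ f (x,t)`. -/
def pdx (f : ℝ → ℝ → ℝ) (x t : ℝ) : ℝ := deriv (fun y => f y t) x

/-- Second spatial derivative `∂ₓ² f (x,t)`. -/
def pdxx (f : ℝ → ℝ → ℝ) (x t : ℝ) : ℝ := iteratedDeriv 2 (fun y => f y t) x

/-- Time derivative `∂ₜ f (x,t)`. -/
def pdt (f : ℝ → ℝ → ℝ) (x t : ℝ) : ℝ := deriv (fun s => f x s) t

/-- Mixed derivative `∂ₜ∂ₓ f (x,t)`. -/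
def pdtx (f : ℝ → ℝ → ℝ) (x t : ℝ) : ℝ := deriv (fun s => pdx f x s) t

/-- The nonlocal term `I(t)`. -/
def Iterm (lam kappa : ℝ) (u b : ℝ → ℝ → ℝ) (t : ℝ) : ℝ :=
  (lam + kappa) * (∫ y in (0:ℝ)..1, (pdx b y t) ^ 2)
    - (lam + 1) * (∫ y in (0:ℝ)..1, (pdx u y t) ^ 2)

/-- `(u,b)` is a smooth solution of the generalized system on `[0,1] × [0,T)`
(the time `T` is an extended real, allowing `T = ∞`). -/
def GSys (lam kappa : ℝ) (T : EReal) (u b : ℝ → ℝ → ℝ) : Prop :=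
  ContDiff ℝ (⊤ : ℕ∞) (fun p : ℝ × ℝ => u p.1 p.2) ∧
  ContDiff ℝ (⊤ : ℕ∞) (fun p : ℝ × ℝ => b p.1 p.2) ∧
  ∀ x ∈ Icc (0:ℝ) 1, ∀ t : ℝ, 0 ≤ t → (t : EReal) < T →
    (pdtx u x t + u x t * pdxx u x t
      = lam * (pdx u x t) ^ 2 - lam * (pdx b x t) ^ 2 + kappa * b x t * pdxx b x t
        + Iterm lam kappa u b t) ∧
    (pdt b x t + u x t * pdx b x t = kappa * b x t * pdx u x t)

/-- Dirichlet boundary conditions on `[0,T)`. -/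
def DirichletBC (T : EReal) (u b : ℝ → ℝ → ℝ) : Prop :=
  ∀ t : ℝ, 0 ≤ t → (t : EReal) < T →
    u 0 t = 0 ∧ u 1 t = 0 ∧ b 0 t = 0 ∧ b 1 t = 0

/-- Periodic boundary conditions on `[0,T)`. -/
def PeriodicBC (T : EReal) (u b : ℝ → ℝ → ℝ) : Prop :=
  ∀ t : ℝ, 0 ≤ t → (t : EReal) < T →
    u 0 t = u 1 t ∧ pdx u 0 t = pdx u 1 t ∧ b 0 t = b 1 t ∧ pdx b 0 t = pdx b 1 t

/-- `γ` is a Lagrangian trajectory for `u` starting at `α₀`, on the time interval `[0,T)`. -/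
def Traj (T : EReal) (u : ℝ → ℝ → ℝ) (α₀ : ℝ) (γ : ℝ → ℝ) : Prop :=
  γ 0 = α₀ ∧ ∀ t : ℝ, 0 ≤ t → (t : EReal) < T →
    γ t ∈ Icc (0:ℝ) 1 ∧ HasDerivAt γ (u (γ t) t) t

/-- The Jacobian `γ_α(α₀,t) = exp (∫₀ᵗ ∂ₓu(γ(α₀,s),s) ds)` along a trajectory `γ`. -/
def Jac (u : ℝ → ℝ → ℝ) (γ : ℝ → ℝ) (t : ℝ) : ℝ :=
  Real.exp (∫ s in (0:ℝ)..t, pdx u (γ s) s)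

/-- `f` has a zero of order `m` at `x₀`. -/
def ZeroOfOrder (f : ℝ → ℝ) (m : ℕ) (x₀ : ℝ) : Prop :=
  (∀ n < m, iteratedDeriv n f x₀ = 0) ∧ iteratedDeriv m f x₀ ≠ 0


section AuxLemmas

lemma pdx_eq_fderiv {f : ℝ → ℝ → ℝ} (hf : ContDiff ℝ (⊤ : ℕ∞) (fun p : ℝ × ℝ => f p.1 p.2)) (x t : ℝ) :
    pdx f x t = fderiv ℝ (fun p : ℝ × ℝ => f p.1 p.2) (x, t) (1, 0) := by
  have h1 : HasDerivAt (fun y : ℝ => (y, t)) ((1 : ℝ), (0 : ℝ)) x :=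
    (hasDerivAt_id x).prodMk (hasDerivAt_const x t)
  have h2 := ((hf.differentiable (by simp)) (x, t)).hasFDerivAt
  have h3 : HasDerivAt (fun y => f y t) (fderiv ℝ (fun p : ℝ × ℝ => f p.1 p.2) (x, t) (1, 0)) x := by have := h2.comp_hasDerivAt x h1; exact this
  exact h3.deriv

lemma pdt_eq_fderiv {f : ℝ → ℝ → ℝ} (hf : ContDiff ℝ (⊤ : ℕ∞) (fun p : ℝ × ℝ => f p.1 p.2)) (x t : ℝ) :
    pdt f x t = fderiv ℝ (fun p : ℝ × ℝ => f p.1 p.2) (x, t) (0, 1) := by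
  have h1 : HasDerivAt (fun s : ℝ => (x, s)) ((0 : ℝ), (1 : ℝ)) t :=
    (hasDerivAt_const t x).prodMk (hasDerivAt_id t)
  have h2 := ((hf.differentiable (by simp)) (x, t)).hasFDerivAt
  have h3 : HasDerivAt (fun s => f x s) (fderiv ℝ (fun p : ℝ × ℝ => f p.1 p.2) (x, t) (0, 1)) t := by have := h2.comp_hasDerivAt t h1; exact this
  exact h3.deriv

lemma hasDerivAt_curve {f : ℝ → ℝ → ℝ} (hf : ContDiff ℝ (⊤ : ℕ∞) (fun p : ℝ × ℝ => f p.1 p.2))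
    {φ ψ : ℝ → ℝ} {v w s : ℝ} (hφ : HasDerivAt φ v s) (hψ : HasDerivAt ψ w s) :
    HasDerivAt (fun r => f (φ r) (ψ r))
      (pdx f (φ s) (ψ s) * v + pdt f (φ s) (ψ s) * w) s := by
  have hc : HasDerivAt (fun r => (φ r, ψ r)) (v, w) s := hφ.prodMk hψ
  have hF := ((hf.differentiable (by simp)) (φ s, ψ s)).hasFDerivAt
  have h := hF.comp_hasDerivAt s hc
  refine h.congr_deriv ?_
  rw [pdx_eq_fderiv hf, pdt_eq_fderiv hf]
  have hvw : ((v, w) : ℝ × ℝ) = v • ((1 : ℝ), (0 : ℝ)) + w • ((0 : ℝ), (1 : ℝ)) := by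
    simp [Prod.ext_iff]
  rw [hvw, map_add, _root_.map_smul, _root_.map_smul]
  simp [mul_comm]

lemma contDiff_pdx {f : ℝ → ℝ → ℝ} (hf : ContDiff ℝ (⊤ : ℕ∞) (fun p : ℝ × ℝ => f p.1 p.2)) :
    ContDiff ℝ (⊤ : ℕ∞) (fun p : ℝ × ℝ => pdx f p.1 p.2) := by
  have h1 : ContDiff ℝ (⊤ : ℕ∞) (fderiv ℝ (fun p : ℝ × ℝ => f p.1 p.2)) :=
    hf.fderiv_right (by simp)
  have h2 : ContDiff ℝ (⊤ : ℕ∞) (fun p : ℝ × ℝ =>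
      fderiv ℝ (fun p : ℝ × ℝ => f p.1 p.2) p ((1 : ℝ), (0 : ℝ))) :=
    (ContinuousLinearMap.apply ℝ ℝ ((1 : ℝ), (0 : ℝ))).contDiff.comp h1
  have heq : (fun p : ℝ × ℝ => pdx f p.1 p.2) = fun p : ℝ × ℝ =>
      fderiv ℝ (fun p : ℝ × ℝ => f p.1 p.2) p ((1 : ℝ), (0 : ℝ)) := by
    funext p
    exact pdx_eq_fderiv hf p.1 p.2
  rw [heq]; exact h2

lemma pdtx_eq (f : ℝ → ℝ → ℝ) (x t : ℝ) : pdtx f x t = pdt (pdx f) x t := rfl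

lemma pdxx_eq (f : ℝ → ℝ → ℝ) (x t : ℝ) : pdxx f x t = pdx (pdx f) x t := by
  have h : pdx (pdx f) x t = deriv (deriv (fun y => f y t)) x := by
    simp only [pdx]
  rw [pdxx, h]
  rw [show (2:ℕ) = 1 + 1 from rfl, iteratedDeriv_succ, iteratedDeriv_one]

lemma eq_of_hasDerivAt_zero {g : ℝ → ℝ} {t : ℝ} (ht : 0 ≤ t)
    (h : ∀ s ∈ Icc (0:ℝ) t, HasDerivAt g 0 s) : g t = g 0 := by
  have hc : ContinuousOn g (Icc 0 t) := fun s hs => (h s hs).continuousAt.continuousWithinAt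
  have hconst := constant_of_has_deriv_right_zero hc
    (fun s hs => (h s (Ico_subset_Icc_self hs)).hasDerivWithinAt)
  exact hconst t (right_mem_Icc.2 ht)

end AuxLemmas

/-- global existence for `(λ,κ) = (0,0)`: explicit formulas for `b`, the
Jacobian `∂_αγ`, and `uₓ` along the Lagrangian trajectories, together with the bound

`0 ≤ u₀'(α) − uₓ(γ(α,t),t) ≤ ∫₀¹ u₀'(β) e^{t u₀'(β)} dβ`. -/
theorem statement15 (T : EReal) (hT : 0 < T)
    (u b : ℝ → ℝ → ℝ)
    (hsys : GSys 0 0 T u b)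
    (hbc : DirichletBC T u b)
    (γ : ℝ → ℝ → ℝ)
    (hγsmooth : ContDiff ℝ (⊤ : ℕ∞) (fun q : ℝ × ℝ => γ q.1 q.2))
    (hγ0 : ∀ α ∈ Icc (0:ℝ) 1, γ α 0 = α)
    (hγmem : ∀ α ∈ Icc (0:ℝ) 1, ∀ t : ℝ, 0 ≤ t → (t : EReal) < T → γ α t ∈ Icc (0:ℝ) 1)
    (hγode : ∀ α ∈ Icc (0:ℝ) 1, ∀ t : ℝ, 0 ≤ t → (t : EReal) < T →
      HasDerivAt (fun s => γ α s) (u (γ α t) t) t)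
    (hγleft : ∀ t : ℝ, 0 ≤ t → (t : EReal) < T → γ 0 t = 0)
    (hγright : ∀ t : ℝ, 0 ≤ t → (t : EReal) < T → γ 1 t = 1)
    (hγjac : ∀ α ∈ Icc (0:ℝ) 1, ∀ t : ℝ, 0 ≤ t → (t : EReal) < T →
      deriv (fun β => γ β t) α = Real.exp (∫ s in (0:ℝ)..t, pdx u (γ α s) s)) :
    ∀ α ∈ Icc (0:ℝ) 1, ∀ t : ℝ, 0 ≤ t → (t : EReal) < T →
      b (γ α t) t = b α 0 ∧
      deriv (fun β => γ β t) α
        = Real.exp (t * pdx u α 0) / (∫ β in (0:ℝ)..1, Real.exp (t * pdx u β 0)) ∧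
      pdx u (γ α t) t
        = pdx u α 0 - (∫ β in (0:ℝ)..1, pdx u β 0 * Real.exp (t * pdx u β 0))
            / (∫ β in (0:ℝ)..1, Real.exp (t * pdx u β 0)) ∧
      0 ≤ pdx u α 0 - pdx u (γ α t) t ∧
      pdx u α 0 - pdx u (γ α t) t
        ≤ ∫ β in (0:ℝ)..1, pdx u β 0 * Real.exp (t * pdx u β 0) := by
  obtain ⟨hu, hb, heq⟩ := hsys
  intro α hα t ht0 htT
  have h0T : ((0:ℝ) : EReal) < T := by exact_mod_cast hT
  have hltT : ∀ r s : ℝ, r ≤ s → (s : EReal) < T → (r : EReal) < T := by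
    intro r s hrs hsT
    exact lt_of_le_of_lt (by exact_mod_cast hrs) hsT
  have hP : ContDiff ℝ (⊤ : ℕ∞) (fun p : ℝ × ℝ => pdx u p.1 p.2) := contDiff_pdx hu
  have hPc : Continuous (fun p : ℝ × ℝ => pdx u p.1 p.2) := hP.continuous
  have hγc : Continuous (fun q : ℝ × ℝ => γ q.1 q.2) := hγsmooth.continuous
  have h0mem : (0:ℝ) ∈ Icc (0:ℝ) 1 := ⟨le_refl 0, zero_le_one⟩
  -- derivative of x-slices of u
  have huslice : ∀ τ : ℝ, ContDiff ℝ (⊤ : ℕ∞) (fun y => u y τ) :=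
    fun τ => hu.comp (contDiff_id.prodMk contDiff_const)
  -- (K1) derivative of pdx u along trajectories
  have hw_deriv : ∀ β ∈ Icc (0:ℝ) 1, ∀ s : ℝ, 0 ≤ s → (s : EReal) < T →
      HasDerivAt (fun r => pdx u (γ β r) r) (Iterm 0 0 u b s) s := by
    intro β hβ s hs0 hsT
    have h := hasDerivAt_curve hP (hγode β hβ s hs0 hsT) (hasDerivAt_id s)
    simp only [id_eq, mul_one] at h
    have heq1 := (heq (γ β s) (hγmem β hβ s hs0 hsT) s hs0 hsT).1
    simp only [zero_mul, mul_zero, sub_zero, add_zero, zero_add] at heq1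
    rw [pdtx_eq, pdxx_eq] at heq1
    convert h using 1
    rw [← heq1]; ring
  -- (K2) structure of pdx u along trajectories
  have hw_eq : ∀ β ∈ Icc (0:ℝ) 1, ∀ s : ℝ, 0 ≤ s → (s : EReal) < T →
      pdx u (γ β s) s = pdx u β 0 + (pdx u (γ 0 s) s - pdx u 0 0) := by
    intro β hβ s hs0 hsT
    have hconst : (fun r => pdx u (γ β r) r - pdx u (γ 0 r) r) s
        = (fun r => pdx u (γ β r) r - pdx u (γ 0 r) r) 0 := by
      apply eq_of_hasDerivAt_zero hs0
      intro r hr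
      have hrT : (r : EReal) < T := hltT r s hr.2 hsT
      have h1 := hw_deriv β hβ r hr.1 hrT
      have h2 := hw_deriv 0 h0mem r hr.1 hrT
      exact (h1.sub h2).congr_deriv (sub_self _)
    simp only [hγ0 β hβ, hγ0 0 h0mem] at hconst
    have := hconst
    linarith [this]
  -- continuity helpers
  have hw0c : Continuous (fun s : ℝ => pdx u (γ 0 s) s) :=
    hPc.comp ((hγc.comp (continuous_const.prodMk continuous_id)).prodMk continuous_id)
  have hψc : Continuous (fun s : ℝ => pdx u (γ 0 s) s - pdx u 0 0) :=
    hw0c.sub continuous_const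
  have hu0'c : Continuous (fun β : ℝ => pdx u β 0) :=
    hPc.comp (continuous_id.prodMk continuous_const)
  have hexpc : Continuous (fun β : ℝ => Real.exp (t * pdx u β 0)) :=
    Real.continuous_exp.comp (continuous_const.mul hu0'c)
  have huec : Continuous (fun β : ℝ => pdx u β 0 * Real.exp (t * pdx u β 0)) :=
    hu0'c.mul hexpc
  set C : ℝ := ∫ s in (0:ℝ)..t, (pdx u (γ 0 s) s - pdx u 0 0) with hCdef
  -- (K4) the Jacobian formula in terms of C
  have hjac_formula : ∀ β ∈ Icc (0:ℝ) 1,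
      deriv (fun β' => γ β' t) β = Real.exp (t * pdx u β 0 + C) := by
    intro β hβ
    rw [hγjac β hβ t ht0 htT]
    congr 1
    have hcong : (∫ s in (0:ℝ)..t, pdx u (γ β s) s)
        = ∫ s in (0:ℝ)..t, (pdx u β 0 + (pdx u (γ 0 s) s - pdx u 0 0)) := by
      apply intervalIntegral.integral_congr
      intro s hs
      rw [uIcc_of_le ht0] at hs
      exact hw_eq β hβ s hs.1 (hltT s t hs.2 htT)
    rw [hcong, intervalIntegral.integral_add (intervalIntegrable_const)
      (hψc.intervalIntegrable 0 t), intervalIntegral.integral_const]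
    simp [mul_comm, hCdef]
  -- slices of γ
  have hγslice : ContDiff ℝ (⊤ : ℕ∞) (fun β => γ β t) :=
    hγsmooth.comp (contDiff_id.prodMk contDiff_const)
  have hdγ : ∀ β : ℝ, HasDerivAt (fun β' => γ β' t) (deriv (fun β' => γ β' t) β) β :=
    fun β => ((hγslice.differentiable (by simp)) β).hasDerivAt
  have hdγc : Continuous (deriv (fun β' => γ β' t)) := hγslice.continuous_deriv (by simp)
  -- FTC for γ in β
  have hFTC1 : (∫ β in (0:ℝ)..1, deriv (fun β' => γ β' t) β) = 1 := by
    rw [intervalIntegral.integral_deriv_eq_sub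
      (fun β _ => (hγslice.differentiable (by simp)) β) (hdγc.intervalIntegrable 0 1)]
    rw [hγright t ht0 htT, hγleft t ht0 htT]; norm_num
  set F : ℝ := ∫ β in (0:ℝ)..1, Real.exp (t * pdx u β 0) with hFdef
  have hFC : F * Real.exp C = 1 := by
    have h1 : (∫ β in (0:ℝ)..1, deriv (fun β' => γ β' t) β)
        = ∫ β in (0:ℝ)..1, Real.exp (t * pdx u β 0) * Real.exp C := by
      apply intervalIntegral.integral_congr
      intro β hβ
      rw [uIcc_of_le (zero_le_one)] at hβ
      rw [hjac_formula β hβ, Real.exp_add]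
    rw [h1, intervalIntegral.integral_mul_const] at hFTC1
    exact hFTC1
  have hFpos : 0 < F := by
    have h1 := Real.exp_pos C
    nlinarith
  -- (b)
  have hb_formula : ∀ β ∈ Icc (0:ℝ) 1, deriv (fun β' => γ β' t) β
      = Real.exp (t * pdx u β 0) / F := by
    intro β hβ
    rw [hjac_formula β hβ, Real.exp_add]
    have hexpC : Real.exp C = 1 / F := by
      field_simp at hFC ⊢
      linarith [hFC]
    rw [hexpC]
    ring
  set G : ℝ := ∫ β in (0:ℝ)..1, pdx u β 0 * Real.exp (t * pdx u β 0) with hGdef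
  -- FTC for u(γ(β,t),t) in β
  have hFTC2 : (∫ β in (0:ℝ)..1, pdx u (γ β t) t * deriv (fun β' => γ β' t) β) = 0 := by
    have hcomp : ∀ β : ℝ, HasDerivAt (fun β' => u (γ β' t) t)
        (pdx u (γ β t) t * deriv (fun β' => γ β' t) β) β := by
      intro β
      have h1 : HasDerivAt (fun y => u y t) (pdx u (γ β t) t) (γ β t) :=
        (((huslice t).differentiable (by simp)) (γ β t)).hasDerivAt
      exact h1.comp β (hdγ β)
    have hintg : Continuous (fun β => pdx u (γ β t) t * deriv (fun β' => γ β' t) β) :=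
      (hPc.comp ((hγc.comp (continuous_id.prodMk continuous_const)).prodMk
        continuous_const)).mul hdγc
    rw [intervalIntegral.integral_eq_sub_of_hasDerivAt (fun β _ => hcomp β)
      (hintg.intervalIntegrable 0 1)]
    rw [hγright t ht0 htT, hγleft t ht0 htT, (hbc t ht0 htT).2.1, (hbc t ht0 htT).1]
    ring
  set c : ℝ := pdx u (γ 0 t) t - pdx u 0 0 with hcdef
  -- evaluate hFTC2
  have hGc : G + c * F = 0 := by
    have h1 : (∫ β in (0:ℝ)..1, pdx u (γ β t) t * deriv (fun β' => γ β' t) β)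
        = ∫ β in (0:ℝ)..1, (pdx u β 0 * Real.exp (t * pdx u β 0)
            + c * Real.exp (t * pdx u β 0)) * (1/F) := by
      apply intervalIntegral.integral_congr
      intro β hβ
      rw [uIcc_of_le (zero_le_one)] at hβ
      beta_reduce
      rw [hw_eq β hβ t ht0 htT, hb_formula β hβ]
      field_simp
      ring
    rw [h1, intervalIntegral.integral_mul_const,
      intervalIntegral.integral_add (huec.intervalIntegrable 0 1)
        ((show Continuous (fun β => c * Real.exp (t * pdx u β 0)) from continuous_const.mul hexpc).intervalIntegrable 0 1),
      intervalIntegral.integral_const_mul, ← hFdef, ← hGdef] at hFTC2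
    have hFne : F ≠ 0 := ne_of_gt hFpos
    rw [mul_one_div, div_eq_zero_iff] at hFTC2
    rcases hFTC2 with h | h
    · exact h
    · exact absurd h hFne
  -- (c)
  have hc_formula : pdx u (γ α t) t = pdx u α 0 - G / F := by
    rw [hw_eq α hα t ht0 htT]
    have : c = -G / F := by
      field_simp
      linarith [hGc]
    rw [← hcdef, this]
    ring
  -- ∫ u₀' = 0
  have hFTC3 : (∫ β in (0:ℝ)..1, pdx u β 0) = 0 := by
    have hcomp : ∀ β : ℝ, HasDerivAt (fun y => u y 0) (pdx u β 0) β :=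
      fun β => (((huslice 0).differentiable (by simp)) β).hasDerivAt
    rw [intervalIntegral.integral_eq_sub_of_hasDerivAt (fun β _ => hcomp β)
      (hu0'c.intervalIntegrable 0 1)]
    rw [(hbc 0 (le_refl 0) h0T).2.1, (hbc 0 (le_refl 0) h0T).1]
    ring
  -- F ≥ 1
  have hF1 : 1 ≤ F := by
    have hmono : (∫ β in (0:ℝ)..1, (1 + t * pdx u β 0))
        ≤ ∫ β in (0:ℝ)..1, Real.exp (t * pdx u β 0) := by
      apply intervalIntegral.integral_mono_on zero_le_one
        ((show Continuous (fun β : ℝ => 1 + t * pdx u β 0) from continuous_const.add (continuous_const.mul hu0'c)).intervalIntegrable 0 1)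
        (hexpc.intervalIntegrable 0 1)
      intro β hβ
      linarith [Real.add_one_le_exp (t * pdx u β 0)]
    rw [intervalIntegral.integral_add (intervalIntegrable_const)
      ((show Continuous (fun β : ℝ => t * pdx u β 0) from continuous_const.mul hu0'c).intervalIntegrable 0 1),
      intervalIntegral.integral_const, intervalIntegral.integral_const_mul, hFTC3] at hmono
    simpa using hmono
  -- G ≥ 0
  have hG0 : 0 ≤ G := by
    have hmono : (∫ β in (0:ℝ)..1, pdx u β 0)
        ≤ ∫ β in (0:ℝ)..1, pdx u β 0 * Real.exp (t * pdx u β 0) := by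
      apply intervalIntegral.integral_mono_on zero_le_one
        (hu0'c.intervalIntegrable 0 1) (huec.intervalIntegrable 0 1)
      intro β hβ
      set x := pdx u β 0
      rcases le_or_gt 0 x with hx | hx
      · have h1 : (1:ℝ) ≤ Real.exp (t * x) := Real.one_le_exp (by positivity)
        nlinarith
      · have h1 : Real.exp (t * x) ≤ 1 := by
          apply Real.exp_le_one_iff.2
          nlinarith
        nlinarith
    rw [hFTC3] at hmono
    exact le_trans (le_refl 0) hmono
  -- (a)
  have ha : b (γ α t) t = b α 0 := by
    have hconst : (fun r => b (γ α r) r) t = (fun r => b (γ α r) r) 0 := by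
      apply eq_of_hasDerivAt_zero ht0
      intro s hs
      have hsT : (s : EReal) < T := hltT s t hs.2 htT
      have h := hasDerivAt_curve hb (hγode α hα s hs.1 hsT) (hasDerivAt_id s)
      simp only [id_eq, mul_one] at h
      have heq2 := (heq (γ α s) (hγmem α hα s hs.1 hsT) s hs.1 hsT).2
      simp only [zero_mul] at heq2
      convert h using 1
      linarith [heq2]
    simp only at hconst
    rw [hconst, hγ0 α hα]
  refine ⟨ha, hb_formula α hα, hc_formula, ?_, ?_⟩
  · rw [hc_formula]
    have : pdx u α 0 - (pdx u α 0 - G / F) = G / F := by ring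
    rw [this]
    exact div_nonneg hG0 (le_of_lt hFpos)
  · rw [hc_formula]
    have h1 : pdx u α 0 - (pdx u α 0 - G / F) = G / F := by ring
    rw [h1]
    exact div_le_self hG0 hF1
end
end

section
/- The function μ ↦ ((1/(2μ))·log((1+μ)/(1−μ)))² is integrable on the open interval (0,1), and ∫₀¹ ((1/(2μ))·log((1+μ)/(1−μ)))² dμ = π²/6. -/
/-!
The substitution `μ = (1 - t) / (1 + t)`, an involution of `(0, 1)` with Jacobian `2 / (1 + t)²`,
turns the integral into `½ ∫₀¹ log² t / (1 - t)² dt`. Expanding `1 / (1 - t)² = ∑ (n + 1) tⁿ`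
and integrating termwise with `∫₀¹ tⁿ log² t dt = 2 / (n + 1)³` gives
`½ ∑ 2 / (n + 1)² = ζ(2) = π² / 6`. Integrability then comes for free, since a non-integrable
function has Bochner integral `0`.
-/

open Real Set MeasureTheory Filter Topology

noncomputable def rpowLogSqAntideriv (s t : ℝ) : ℝ :=
  t ^ s * (log t ^ 2 / s - 2 * log t / s ^ 2 + 2 / s ^ 3)

lemma hasDerivAt_rpowLogSqAntideriv {s t : ℝ} (hs : s ≠ 0) (ht : 0 < t) :
    HasDerivAt (rpowLogSqAntideriv s) (t ^ (s - 1) * log t ^ 2) t := by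
  have hlog : HasDerivAt log t⁻¹ t := hasDerivAt_log ht.ne'
  have hpoly : HasDerivAt (fun t => log t ^ 2 / s - 2 * log t / s ^ 2 + 2 / s ^ 3)
      (2 * log t * t⁻¹ / s - 2 * t⁻¹ / s ^ 2) t := by
    simpa using (((hlog.pow 2).div_const s).sub ((hlog.const_mul 2).div_const (s ^ 2))).add_const
      (2 / s ^ 3)
  refine ((hasDerivAt_rpow_const (p := s) (Or.inl ht.ne')).mul hpoly).congr_deriv ?_
  rw [rpow_sub_one ht.ne']
  field_simp
  ring

lemma tendsto_rpowLogSqAntideriv_nhdsGT_zero {s : ℝ} (hs : 0 < s) :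
    Tendsto (rpowLogSqAntideriv s) (𝓝[>] 0) (𝓝 0) := by
  have hpow : Tendsto (fun t : ℝ => t ^ s) (𝓝[>] 0) (𝓝 0) := by
    simpa [zero_rpow hs.ne'] using
      ((continuous_rpow_const hs.le).tendsto 0).mono_left nhdsWithin_le_nhds
  have hlog := tendsto_log_mul_rpow_nhdsGT_zero hs
  have hlog_sq : Tendsto (fun t => (log t * t ^ (s / 2)) ^ 2) (𝓝[>] 0) (𝓝 0) := by
    simpa using (tendsto_log_mul_rpow_nhdsGT_zero (half_pos hs)).pow 2
  have hsum := ((hlog_sq.div_const s).sub ((hlog.const_mul 2).div_const (s ^ 2))).add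
    (hpow.mul_const (2 / s ^ 3))
  simp only [zero_div, mul_zero, zero_mul, sub_zero, add_zero] at hsum
  refine hsum.congr' ?_
  filter_upwards [self_mem_nhdsWithin] with t (ht : 0 < t)
  rw [rpowLogSqAntideriv, mul_pow, ← rpow_mul_natCast ht.le]
  ring_nf

lemma continuousOn_rpowLogSqAntideriv {s : ℝ} (hs : 0 < s) :
    ContinuousOn (rpowLogSqAntideriv s) (Ici 0) := by
  intro t ht
  rcases (mem_Ici.mp ht).eq_or_lt with rfl | ht
  · rw [← continuousWithinAt_Ioi_iff_Ici, ContinuousWithinAt]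
    simpa [rpowLogSqAntideriv, zero_rpow hs.ne'] using tendsto_rpowLogSqAntideriv_nhdsGT_zero hs
  · exact (hasDerivAt_rpowLogSqAntideriv hs.ne' ht).continuousAt.continuousWithinAt

lemma integrableOn_rpow_mul_log_sq {s : ℝ} (hs : 0 < s) :
    IntegrableOn (fun t => t ^ (s - 1) * log t ^ 2) (Ioo 0 1) :=
  (intervalIntegral.integrableOn_deriv_of_nonneg
    ((continuousOn_rpowLogSqAntideriv hs).mono Icc_subset_Ici_self)
    (fun _ ht => hasDerivAt_rpowLogSqAntideriv hs.ne' ht.1)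
    (fun t ht => by have := ht.1; positivity)).mono_set Ioo_subset_Ioc_self

lemma integral_rpow_mul_log_sq {s : ℝ} (hs : 0 < s) :
    ∫ t in Ioo 0 1, t ^ (s - 1) * log t ^ 2 = 2 / s ^ 3 := by
  rw [← integral_Ioc_eq_integral_Ioo, ← intervalIntegral.integral_of_le zero_le_one,
    intervalIntegral.integral_eq_sub_of_hasDerivAt_of_le zero_le_one
      ((continuousOn_rpowLogSqAntideriv hs).mono Icc_subset_Ici_self)
      (fun _ ht => hasDerivAt_rpowLogSqAntideriv hs.ne' ht.1)
      ((intervalIntegrable_iff_integrableOn_Ioo_of_le zero_le_one).mpr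
        (integrableOn_rpow_mul_log_sq hs))]
  simp [rpowLogSqAntideriv, zero_rpow hs.ne']

lemma hasSum_two_div_succ_sq : HasSum (fun n : ℕ => 2 / ((n : ℝ) + 1) ^ 2) (π ^ 2 / 3) := by
  have h := (hasSum_nat_add_iff' 1).mpr hasSum_zeta_two
  norm_num at h
  rw [show π ^ 2 / 3 = 2 * (π ^ 2 / 6) by ring]
  simpa only [div_eq_mul_inv] using h.mul_left 2

lemma hasSum_succ_mul_pow {t : ℝ} (ht : |t| < 1) :
    HasSum (fun n : ℕ => ((n : ℝ) + 1) * t ^ n) (1 / (1 - t) ^ 2) := by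
  simpa using hasSum_choose_mul_geometric_of_norm_lt_one 1 (r := t) ht

lemma integral_succ_mul_pow_mul_log_sq (n : ℕ) :
    ∫ t in Ioo 0 1, ((n : ℝ) + 1) * t ^ n * log t ^ 2 = 2 / ((n : ℝ) + 1) ^ 2 := by
  have h := integral_rpow_mul_log_sq (s := n + 1) (by positivity)
  simp only [add_sub_cancel_right, rpow_natCast] at h
  simp_rw [mul_assoc, integral_const_mul, h]
  field_simp

lemma integral_log_sq_div_one_sub_sq :
    ∫ t in Ioo 0 1, log t ^ 2 / (1 - t) ^ 2 = π ^ 2 / 3 := by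
  set F : ℕ → ℝ → ℝ := fun n t => ((n : ℝ) + 1) * t ^ n * log t ^ 2
  have hF_int (n : ℕ) : IntegrableOn (F n) (Ioo 0 1) := by
    have h := (integrableOn_rpow_mul_log_sq (s := n + 1) (by positivity)).const_mul ((n : ℝ) + 1)
    simp only [add_sub_cancel_right, rpow_natCast, ← mul_assoc] at h
    exact h
  have hF_norm (n : ℕ) : ∫ t in Ioo 0 1, ‖F n t‖ = 2 / ((n : ℝ) + 1) ^ 2 := by
    rw [← integral_succ_mul_pow_mul_log_sq n]
    refine setIntegral_congr_fun measurableSet_Ioo fun t ht => norm_of_nonneg ?_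
    have := ht.1
    positivity
  have hsum := hasSum_integral_of_summable_integral_norm hF_int
    (by simpa only [hF_norm] using hasSum_two_div_succ_sq.summable)
  simp only [F, integral_succ_mul_pow_mul_log_sq] at hsum
  rw [hasSum_two_div_succ_sq.unique hsum]
  refine setIntegral_congr_fun measurableSet_Ioo fun t ht => ?_
  have hgeom := hasSum_succ_mul_pow (abs_lt.mpr ⟨by linarith [ht.1], ht.2⟩)
  rw [(hgeom.mul_right (log t ^ 2)).tsum_eq]
  ring

lemma mapsTo_one_sub_div_one_add : MapsTo (fun t : ℝ => (1 - t) / (1 + t)) (Ioo 0 1) (Ioo 0 1) :=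
  fun t ⟨h0, h1⟩ =>
    ⟨div_pos (by linarith) (by linarith), (div_lt_one (by linarith)).mpr (by linarith)⟩

lemma bijOn_one_sub_div_one_add : BijOn (fun t : ℝ => (1 - t) / (1 + t)) (Ioo 0 1) (Ioo 0 1) := by
  have hinv : InvOn (fun t : ℝ => (1 - t) / (1 + t)) (fun t : ℝ => (1 - t) / (1 + t))
      (Ioo 0 1) (Ioo 0 1) := by
    refine ⟨fun t ht => ?_, fun t ht => ?_⟩ <;>
    · have : 1 + t ≠ 0 := by linarith [ht.1]
      field_simp
      ring
  exact hinv.bijOn mapsTo_one_sub_div_one_add mapsTo_one_sub_div_one_add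

lemma integral_Ioo_zero_one_eq_integral_comp_one_sub_div_one_add {E : Type*}
    [NormedAddCommGroup E] [NormedSpace ℝ E] (g : ℝ → E) :
    ∫ x in Ioo 0 1, g x = ∫ t in Ioo 0 1, (2 / (1 + t) ^ 2) • g ((1 - t) / (1 + t)) := by
  have hderiv (t : ℝ) (ht : t ∈ Ioo (0 : ℝ) 1) :
      HasDerivWithinAt (fun t : ℝ => (1 - t) / (1 + t)) (-2 / (1 + t) ^ 2) (Ioo 0 1) t := by
    have : 1 + t ≠ 0 := by linarith [ht.1]
    refine (((hasDerivAt_id t).const_sub 1).div ((hasDerivAt_id t).const_add 1)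
      this).hasDerivWithinAt.congr_deriv ?_
    simp only [id]
    ring
  have hbij := bijOn_one_sub_div_one_add
  calc ∫ x in Ioo 0 1, g x = ∫ x in (fun t : ℝ => (1 - t) / (1 + t)) '' Ioo 0 1, g x := by
        rw [hbij.image_eq]
    _ = ∫ t in Ioo 0 1, |-2 / (1 + t) ^ 2| • g ((1 - t) / (1 + t)) :=
        integral_image_eq_integral_abs_deriv_smul measurableSet_Ioo hderiv hbij.injOn g
    _ = ∫ t in Ioo 0 1, (2 / (1 + t) ^ 2) • g ((1 - t) / (1 + t)) := by
        refine setIntegral_congr_fun measurableSet_Ioo fun t ht => ?_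
        have : 0 < 1 + t := by linarith [ht.1]
        rw [abs_div, abs_neg, abs_two, abs_of_pos (by positivity : (0 : ℝ) < (1 + t) ^ 2)]

noncomputable def blowupIntegrand (μ : ℝ) : ℝ := ((1 / (2 * μ)) * log ((1 + μ) / (1 - μ))) ^ 2

lemma smul_blowupIntegrand_one_sub_div_one_add {t : ℝ} (ht : t ∈ Ioo (0 : ℝ) 1) :
    (2 / (1 + t) ^ 2) • blowupIntegrand ((1 - t) / (1 + t)) = log t ^ 2 / (1 - t) ^ 2 / 2 := by
  obtain ⟨h0, h1⟩ := ht
  have h1t : 1 - t ≠ 0 := by linarith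
  have h1t' : 1 + t ≠ 0 := by linarith
  have hratio : (1 + (1 - t) / (1 + t)) / (1 - (1 - t) / (1 + t)) = t⁻¹ := by
    rw [one_add_div h1t', one_sub_div h1t', div_div_div_cancel_right₀ h1t']
    ring
  rw [blowupIntegrand, hratio, log_inv, smul_eq_mul]
  field_simp

/-- the function `μ ↦ ((1/(2μ)) log((1+μ)/(1−μ)))²` is integrable on `(0,1)`
and its integral equals `π²/6` (the blowup time `T_e`). -/
theorem statement16 :
    IntegrableOn (fun μ : ℝ => ((1 / (2*μ)) * Real.log ((1+μ) / (1-μ))) ^ 2)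
      (Ioo (0:ℝ) 1) volume ∧
    (∫ μ in Ioo (0:ℝ) 1, ((1 / (2*μ)) * Real.log ((1+μ) / (1-μ))) ^ 2) = π ^ 2 / 6 := by
  have hintegral : ∫ μ in Ioo (0 : ℝ) 1, blowupIntegrand μ = π ^ 2 / 6 := by
    rw [integral_Ioo_zero_one_eq_integral_comp_one_sub_div_one_add,
      setIntegral_congr_fun measurableSet_Ioo
        fun t ht => smul_blowupIntegrand_one_sub_div_one_add ht,
      integral_div, integral_log_sq_div_one_sub_sq]
    ring
  exact ⟨Integrable.of_integral_ne_zero (hintegral ▸ by positivity), hintegral⟩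
end

section
/- For λ > 0, define F_λ(μ) := ∫₀¹ (1 − λμ(1−2α))^{−1/λ} dα for μ ∈ [0, 1/λ) (the base 1 − λμ(1−2α) is strictly positive there). Then the improper integral t*(λ) := ∫₀^{1/λ} F_λ(μ)^{2λ} dμ is finite if and only if λ > 1/2. -/
open Real Set MeasureTheory intervalIntegral

/-!
With `s = 1 - λμ` and `r = 1/λ`, the inner integral is the mean of `x ^ (-r)` over `[s, 2 - s]`.
Its part over `[s, 2s]` bounds it below by a multiple of `s ^ (1 - r)`, and for every `q > max 1 r`
comparison with `x ^ (-q)` bounds it above by a multiple of `s ^ (1 - q)` (taking `q > 1` avoids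
the logarithm at `r = 1`). So `F_λ ^ (2λ)` is squeezed between powers of `s` whose exponents are
`2λ - 2` and arbitrarily close to it, and `s ^ (2λ - 2)` is integrable at `0` iff `λ > 1/2`.
-/

section AffineRpow

lemma rpow_neg_le_mul_rpow_neg {x b r q : ℝ} (hx : 0 < x) (hxb : x ≤ b) (hrq : r ≤ q) :
    x ^ (-r) ≤ b ^ (q - r) * x ^ (-q) := by
  rw [show -r = (q - r) + -q by ring, rpow_add hx]
  exact mul_le_mul_of_nonneg_right (rpow_le_rpow hx.le hxb (sub_nonneg.2 hrq))
    (rpow_nonneg hx.le _)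

variable {s a : ℝ}

lemma intervalIntegrable_rpow_affine (hs : 0 < s) (ha : 0 ≤ a) (r : ℝ) :
    IntervalIntegrable (fun α => (s + a * α) ^ r) volume 0 1 := by
  refine ContinuousOn.intervalIntegrable (ContinuousOn.rpow_const (by fun_prop) fun α hα => ?_)
  rw [uIcc_of_le zero_le_one] at hα
  exact Or.inl (add_pos_of_pos_of_nonneg hs (mul_nonneg ha hα.1)).ne'

lemma integral_rpow_affine_le (hs : 0 < s) (ha : 0 < a) {q : ℝ} (hq : 1 < q) :
    ∫ α in (0:ℝ)..1, (s + a * α) ^ (-q) ≤ s ^ (1 - q) / (a * (q - 1)) := by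
  have hs0 : (0:ℝ) ∉ uIcc (a * 0 + s) (a * 1 + s) := by
    rw [uIcc_of_le (by linarith)]
    exact fun h => hs.not_ge (by simpa using h.1)
  simp_rw [add_comm s]
  rw [integral_comp_mul_add (fun x => x ^ (-q)) ha.ne',
    integral_rpow (Or.inr ⟨by linarith, hs0⟩), smul_eq_mul, mul_zero, mul_one, zero_add,
    show -q + 1 = -(q - 1) by ring, div_neg, ← neg_div, neg_sub]
  have : 0 ≤ (a + s) ^ (-(q - 1)) := rpow_nonneg (by linarith) _
  calc a⁻¹ * ((s ^ (-(q - 1)) - (a + s) ^ (-(q - 1))) / (q - 1))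
      ≤ a⁻¹ * (s ^ (-(q - 1)) / (q - 1)) := by gcongr; linarith
    _ = s ^ (1 - q) / (a * (q - 1)) := by rw [neg_sub]; field_simp

lemma le_integral_rpow_affine (hs : 0 < s) (hsa : s ≤ a) {r : ℝ} (hr : 0 ≤ r) :
    s ^ (1 - r) / (2 ^ r * a) ≤ ∫ α in (0:ℝ)..1, (s + a * α) ^ (-r) := by
  have ha : 0 < a := hs.trans_le hsa
  have hsa0 : 0 ≤ s / a := by positivity
  calc s ^ (1 - r) / (2 ^ r * a) = ∫ _ in (0:ℝ)..(s / a), (2 * s) ^ (-r) := by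
        rw [intervalIntegral.integral_const, smul_eq_mul, sub_zero, mul_rpow zero_le_two hs.le,
          rpow_sub hs, rpow_one, rpow_neg zero_le_two, rpow_neg hs.le]
        field_simp
    _ ≤ ∫ α in (0:ℝ)..(s / a), (s + a * α) ^ (-r) := by
        refine integral_mono_on hsa0 intervalIntegrable_const
          ((intervalIntegrable_rpow_affine hs ha.le _).mono_set ?_) fun α hα => ?_
        · exact uIcc_subset_uIcc_left (by simp [uIcc_of_le, hsa0, (div_le_one ha).2 hsa])
        · have := (le_div_iff₀' ha).1 hα.2
          exact rpow_le_rpow_of_nonpos (by nlinarith [hα.1]) (by linarith) (neg_nonpos.2 hr)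
    _ ≤ ∫ α in (0:ℝ)..1, (s + a * α) ^ (-r) := by
        refine integral_mono_interval le_rfl hsa0 ((div_le_one ha).2 hsa) ?_
          (intervalIntegrable_rpow_affine hs ha.le _)
        filter_upwards [ae_restrict_mem measurableSet_Ioc] with α hα
        exact rpow_nonneg (by nlinarith [hα.1]) _

end AffineRpow

/-- `F_λ(μ)` in the variable `s = 1 - λμ`, with `r = 1 / λ`. -/
noncomputable def rescaledF (r s : ℝ) : ℝ :=
  ∫ α in (0:ℝ)..1, (s + 2 * (1 - s) * α) ^ (-r)

section rescaledF

variable {r q s : ℝ}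

lemma measurable_rescaledF (r : ℝ) : Measurable (rescaledF r) := by
  have hf : Measurable fun p : ℝ × ℝ => (p.1 + 2 * (1 - p.1) * p.2) ^ (-r) := by fun_prop
  have := hf.stronglyMeasurable.integral_prod_right' (ν := volume.restrict (Ioc (0:ℝ) 1))
  convert this.measurable using 2 with s
  exact integral_of_le zero_le_one

lemma rescaledF_nonneg (hs : 0 < s) (hs1 : s ≤ 1) : 0 ≤ rescaledF r s :=
  integral_nonneg zero_le_one fun α hα =>
    rpow_nonneg (by nlinarith [mul_nonneg (sub_nonneg.2 hs1) hα.1]) _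

lemma rescaledF_le_of_half_le (hr : 0 ≤ r) (hs : 1 / 2 ≤ s) (hs1 : s ≤ 1) :
    rescaledF r s ≤ 2 ^ r := by
  have := integral_mono_on zero_le_one
    (intervalIntegrable_rpow_affine (a := 2 * (1 - s)) (by linarith) (by linarith) (-r))
    (intervalIntegrable_const (c := (1 / 2 : ℝ) ^ (-r))) fun α hα =>
      rpow_le_rpow_of_nonpos (by norm_num) (by nlinarith [mul_nonneg (sub_nonneg.2 hs1) hα.1])
        (neg_nonpos.2 hr)
  simpa [rescaledF, rpow_neg, inv_rpow] using this

lemma rescaledF_le_of_lt_half (hrq : r ≤ q) (hq : 1 < q) (hs : 0 < s) (hs2 : s < 1 / 2) :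
    rescaledF r s ≤ 2 ^ (q - r) / (q - 1) * s ^ (1 - q) := by
  have ha : 1 ≤ 2 * (1 - s) := by linarith
  calc rescaledF r s ≤ ∫ α in (0:ℝ)..1, 2 ^ (q - r) * (s + 2 * (1 - s) * α) ^ (-q) := by
        refine integral_mono_on zero_le_one (intervalIntegrable_rpow_affine hs (by linarith) _)
          ((intervalIntegrable_rpow_affine hs (by linarith) _).const_mul _) fun α hα => ?_
        exact rpow_neg_le_mul_rpow_neg (by nlinarith [hα.1]) (by nlinarith [hα.2]) hrq
    _ ≤ 2 ^ (q - r) * (s ^ (1 - q) / (2 * (1 - s) * (q - 1))) := by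
        rw [intervalIntegral.integral_const_mul]
        gcongr
        exact integral_rpow_affine_le hs (by linarith) hq
    _ = 2 ^ (q - r) / (q - 1) * s ^ (1 - q) / (2 * (1 - s)) := by field_simp
    _ ≤ 2 ^ (q - r) / (q - 1) * s ^ (1 - q) :=
        div_le_self (mul_nonneg (div_nonneg (by positivity) (by linarith)) (by positivity)) ha

lemma rescaledF_le (hr : 0 ≤ r) (hrq : r ≤ q) (hq : 1 < q) (hs : 0 < s) (hs1 : s ≤ 1) :
    rescaledF r s ≤ (2 ^ r + 2 ^ (q - r) / (q - 1)) * s ^ (1 - q) := by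
  have hsq : 1 ≤ s ^ (1 - q) := one_le_rpow_of_pos_of_le_one_of_nonpos hs hs1 (by linarith)
  have h2r : 0 < (2:ℝ) ^ r := by positivity
  have h2q : 0 < (2:ℝ) ^ (q - r) / (q - 1) := div_pos (by positivity) (by linarith)
  rcases le_or_gt (1 / 2) s with hs2 | hs2
  · nlinarith [rescaledF_le_of_half_le hr hs2 hs1]
  · nlinarith [rescaledF_le_of_lt_half hrq hq hs hs2]

lemma rescaledF_ge (hr : 0 ≤ r) (hs : 0 < s) (hs2 : s ≤ 1 / 2) :
    s ^ (1 - r) / 2 ^ (r + 1) ≤ rescaledF r s := by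
  refine le_trans ?_ (le_integral_rpow_affine hs (by linarith) hr)
  rw [rpow_add_one two_ne_zero]
  exact div_le_div_of_nonneg_left (by positivity) (mul_pos (by positivity) (by linarith))
    (by gcongr; linarith)

end rescaledF

lemma intervalIntegrable_comp_one_sub_mul_iff {E : Type*} [NormedAddCommGroup E] {f : ℝ → E}
    {c : ℝ} (hc : c ≠ 0) :
    IntervalIntegrable (fun x => f (1 - c * x)) volume 0 (1 / c) ↔
      IntervalIntegrable f volume 0 1 := by
  have h := IntervalIntegrable.comp_mul_left_iff (f := fun y => f (1 - y)) hc (a := 0) (b := 1)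
  rw [zero_div] at h
  rw [h, ← IntervalIntegrable.comp_sub_left_iff (f := f) 1, sub_zero, sub_self]
  exact ⟨.symm, .symm⟩

lemma lt_of_intervalIntegrable_rescaledF_rpow {lam : ℝ} (hlam : 0 < lam)
    (h : IntervalIntegrable (fun s => rescaledF (1 / lam) s ^ (2 * lam)) volume 0 1) :
    1 / 2 < lam := by
  have hr : 0 ≤ 1 / lam := by positivity
  set K : ℝ := (2 ^ (1 / lam + 1)) ^ (2 * lam)
  have hpow : IntegrableOn (fun s : ℝ => s ^ (2 * lam - 2)) (Ioo 0 (1 / 2)) := by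
    have hH : IntegrableOn (fun s => rescaledF (1 / lam) s ^ (2 * lam)) (Ioo 0 (1 / 2)) :=
      ((intervalIntegrable_iff_integrableOn_Ioo_of_le zero_le_one).1 h).mono_set
        (Ioo_subset_Ioo_right (by norm_num))
    refine Integrable.mono' (hH.const_mul K) (measurable_id.pow_const _).aestronglyMeasurable ?_
    filter_upwards [ae_restrict_mem measurableSet_Ioo] with s ⟨hs0, hs2⟩
    have hlow := (div_le_iff₀ (by positivity)).1 (rescaledF_ge hr hs0 hs2.le)
    rw [norm_of_nonneg (by positivity), show 2 * lam - 2 = (1 - 1 / lam) * (2 * lam) by field_simp,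
      rpow_mul hs0.le, ← mul_rpow (by positivity) (rescaledF_nonneg hs0 (by linarith))]
    exact rpow_le_rpow (by positivity) (by linarith) (by positivity)
  have := (integrableOn_Ioo_rpow_iff (by norm_num)).1 hpow
  linarith

lemma intervalIntegrable_rescaledF_rpow {lam : ℝ} (hlam : 1 / 2 < lam) :
    IntervalIntegrable (fun s => rescaledF (1 / lam) s ^ (2 * lam)) volume 0 1 := by
  have hlam0 : 0 < lam := by linarith
  obtain ⟨q, hq, hq'⟩ : ∃ q, max 1 (1 / lam) < q ∧ q < 1 + 1 / (2 * lam) :=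
    exists_between <| max_lt (lt_add_of_pos_right 1 (by positivity))
      (by rw [div_lt_iff₀ hlam0]; field_simp; linarith)
  obtain ⟨hq1, hrq⟩ := max_lt_iff.1 hq
  set C := (2:ℝ) ^ (1 / lam) + 2 ^ (q - 1 / lam) / (q - 1)
  have hC : 0 ≤ C := add_nonneg (by positivity) (div_nonneg (by positivity) (by linarith))
  have he : -1 < (1 - q) * (2 * lam) := by
    have := (lt_div_iff₀ (by positivity : (0:ℝ) < 2 * lam)).1
      (by linarith : q - 1 < 1 / (2 * lam))
    linarith
  refine ((intervalIntegral.intervalIntegrable_rpow' he).const_mul (C ^ (2 * lam))).mono_fun'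
    ((measurable_rescaledF _).pow_const _).aestronglyMeasurable ?_
  rw [uIoc_of_le zero_le_one]
  filter_upwards [ae_restrict_mem measurableSet_Ioc] with s ⟨hs0, hs1⟩
  have hH := rescaledF_nonneg (r := 1 / lam) hs0 hs1
  rw [norm_of_nonneg (by positivity), rpow_mul hs0.le, ← mul_rpow hC (by positivity)]
  exact rpow_le_rpow hH (rescaledF_le (by positivity) hrq.le hq1 hs0 hs1) (by positivity)

/-- for `λ > 0`, the improper integral
`t*(λ) = ∫₀^{1/λ} (∫₀¹ (1 − λμ(1−2α))^{−1/λ} dα)^{2λ} dμ` is finite iff `λ > 1/2`. -/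
theorem statement19 (lam : ℝ) (hlam : 0 < lam) :
    IntervalIntegrable
      (fun μ => (∫ α in (0:ℝ)..1, (1 - lam * μ * (1 - 2*α)) ^ (-(1/lam))) ^ (2*lam))
      volume 0 (1/lam)
    ↔ 1/2 < lam := by
  have hF : (fun μ => (∫ α in (0:ℝ)..1, (1 - lam * μ * (1 - 2*α)) ^ (-(1/lam))) ^ (2*lam)) =
      fun μ => rescaledF (1 / lam) (1 - lam * μ) ^ (2 * lam) := by
    funext μ
    simp only [rescaledF]
    congr! 4 with α
    ring
  rw [hF, intervalIntegrable_comp_one_sub_mul_iff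
    (f := fun s => rescaledF (1 / lam) s ^ (2 * lam)) hlam.ne']
  exact ⟨lt_of_intervalIntegrable_rescaledF_rpow hlam, intervalIntegrable_rescaledF_rpow⟩
end
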